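/- arXiv:math/0606580 — 3 statements merged into one kernel-verified Lean document; each statement's English description precedes it below -/
import Mathlib

section
/- Let n be odd and k a field with char(k) ∤ n. Let χ : G → PGL_n(k) be an injective group homomorphism from a group G of exponent dividing n, and suppose ι ∈ PGL_n(k) satisfies ι χ(T) ι^{-1} = χ(T)^{-1} = χ(-T) for all T ∈ G. Then for each T ∈ G there is a unique lift M_T ∈ GL_n(k) of χ(T) satisfying ι̃ M_T ι̃^{-1} = M_T^{-1} and M_T^n = I, where ι̃ is any fixed lift of ι to GL_n(k); in particular, the condition ι̃ M ι̃^{-1} = M^{-1} determines a lift of χ(T) up to sign, and since n is odd the extra condition M^n = I pins down the sign uniquely. -/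
open Matrix

lemma stmt_10_aux {n : ℕ} (hpos : 0 < n) {k : Type*} [Field k]
    (h : (-1 : Matrix (Fin n) (Fin n) k) = 1) (A : Matrix (Fin n) (Fin n) k) :
    -A = A := by
  have h1 : (-1 : k) = 1 := by
    have := congrFun (congrFun h ⟨0, hpos⟩) ⟨0, hpos⟩
    simpa [Matrix.one_apply_eq] using this
  ext i j
  rw [Matrix.neg_apply, ← neg_one_mul, h1, one_mul]

/-- Let `n` be odd, `char(k) ∤ n`. If `M ∈ GL_n(k)` lifts an element of `PGL_n(k)`
of order dividing `n` (i.e. `M^n` is a nonzero scalar) and satisfies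
`ι M ι⁻¹ = M⁻¹`, then `M^n = ±I`, and exactly one of the two lifts `±M`
satisfies `X^n = I`. -/
theorem stmt_10 {n : ℕ} (hodd : Odd n) (hpos : 0 < n) {k : Type*} [Field k]
    (hchar : (n : k) ≠ 0)
    (ι M : GL (Fin n) k)
    (hscalar : ∃ c : k, c ≠ 0 ∧
      (M : Matrix (Fin n) (Fin n) k) ^ n = c • (1 : Matrix (Fin n) (Fin n) k))
    (hinv : ι * M * ι⁻¹ = M⁻¹) :
    ((M : Matrix (Fin n) (Fin n) k) ^ n = 1 ∨
      (M : Matrix (Fin n) (Fin n) k) ^ n = -1) ∧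
    (∃! N : Matrix (Fin n) (Fin n) k,
      (N = (M : Matrix (Fin n) (Fin n) k) ∨ N = -(M : Matrix (Fin n) (Fin n) k)) ∧
      N ^ n = 1) := by
  obtain ⟨c, hc0, hMn⟩ := hscalar
  -- semiconjugation
  have h1 : SemiconjBy ι M M⁻¹ := mul_inv_eq_iff_eq_mul.mp hinv
  have h2 : ι * M ^ n = (M ^ n)⁻¹ * ι := by
    have := (h1.pow_right n).eq
    rwa [inv_pow] at this
  have key : M ^ n * ι * M ^ n = ι := by
    rw [mul_assoc, h2, ← mul_assoc, mul_inv_cancel, one_mul]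
  -- take matrix values
  have keyM : ((M : Matrix (Fin n) (Fin n) k) ^ n) * (ι : Matrix (Fin n) (Fin n) k) *
      ((M : Matrix (Fin n) (Fin n) k) ^ n) = (ι : Matrix (Fin n) (Fin n) k) := by
    have := congrArg (Units.val) key
    simpa [Units.val_mul] using this
  rw [hMn] at keyM
  have keyM2 : (c * c) • (ι : Matrix (Fin n) (Fin n) k) = (ι : Matrix (Fin n) (Fin n) k) := by
    simpa [Matrix.smul_mul, Matrix.mul_smul, smul_smul] using keyM
  have hι0 : (ι : Matrix (Fin n) (Fin n) k) ≠ 0 := by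
    intro h0
    have h1' : (ι : Matrix (Fin n) (Fin n) k) * ((ι⁻¹ : GL (Fin n) k) : Matrix (Fin n) (Fin n) k)
        = 1 := by
      rw [← Units.val_mul, mul_inv_cancel, Units.val_one]
    rw [h0, zero_mul] at h1'
    have := congrFun (congrFun h1' ⟨0, hpos⟩) ⟨0, hpos⟩
    simp [Matrix.one_apply_eq] at this
  have hcc : c * c = 1 := by
    by_contra hne
    have : (c * c - 1) • (ι : Matrix (Fin n) (Fin n) k) = 0 := by
      rw [sub_smul, one_smul, keyM2, sub_self]
    rcases smul_eq_zero.mp this with h | h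
    · exact hne (by linear_combination h)
    · exact hι0 h
  have hc : c = 1 ∨ c = -1 := mul_self_eq_one_iff.mp hcc
  have part1 : ((M : Matrix (Fin n) (Fin n) k) ^ n = 1 ∨
      (M : Matrix (Fin n) (Fin n) k) ^ n = -1) := by
    rcases hc with h | h
    · left; rw [hMn, h, one_smul]
    · right; rw [hMn, h, neg_smul, one_smul]
  refine ⟨part1, ?_⟩
  have hnegpow : (-(M : Matrix (Fin n) (Fin n) k)) ^ n =
      -((M : Matrix (Fin n) (Fin n) k) ^ n) := Odd.neg_pow hodd _
  rcases part1 with h | h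
  · refine ⟨(M : Matrix (Fin n) (Fin n) k), ⟨Or.inl rfl, h⟩, ?_⟩
    rintro N ⟨hN | hN, hNn⟩
    · exact hN
    · have hx : (-(M : Matrix (Fin n) (Fin n) k)) ^ n = 1 := by rw [← hN]; exact hNn
      rw [hnegpow, h] at hx
      rw [hN, stmt_10_aux hpos hx]
  · refine ⟨-(M : Matrix (Fin n) (Fin n) k), ⟨Or.inr rfl, by rw [hnegpow, h, neg_neg]⟩, ?_⟩
    rintro N ⟨hN | hN, hNn⟩
    · have hx : ((M : Matrix (Fin n) (Fin n) k)) ^ n = 1 := by rw [← hN]; exact hNn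
      rw [h] at hx
      rw [hN]
      exact (stmt_10_aux hpos hx _).symm
    · exact hN
end

section
/- Let G be a finite abelian group of exponent n, k a field, and suppose M_T ∈ GL_n(k) (T ∈ G) satisfy M_S M_T = ε(S,T) M_{S+T} with ε(S,T)/ε(T,S) = e(S,T) a nondegenerate pairing, |G| = n^2, and M_T^n = α(T)·I for a function α : G → k*. If T ∈ G has exact order r, then the characteristic polynomial of M_T equals (X^r - c)^{n/r} for some c ∈ k* with c^{n/r} = ±α(T); in particular det(M_T) = ± α(T), and if n is odd det(M_T) = α(T). -/
/-!
Write `e(S, T) = ε(S, T) / ε(T, S)`, so that `M_S M_T M_S⁻¹ = e(S, T) M_T`. The pairing `e` is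
bimultiplicative and alternating, and `S ↦ e(S, T)` is a character of `G` whose values have
exponent exactly `r` by nondegeneracy; as its image is a finite cyclic subgroup of `kˣ`, some
`ζ = e(S, T)` is a primitive `r`-th root of unity. Hence `M_T` is conjugate to `ζ M_T`, so the
multiset of eigenvalues of `M_T` is stable under multiplication by `ζ`. Since `M_T^r` is a scalar
`c`, all eigenvalues are `r`-th roots of `c`, which form one `ζ`-orbit; so they all have the same
multiplicity and the characteristic polynomial is `(X^r - c)^(n/r)`.
-/

open Matrix Polynomial

theorem Multiset.eq_nsmul_of_count_eq {α : Type*} [DecidableEq α] {R N : Multiset α} {m : ℕ}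
    (hN : N.Nodup) (hRN : ∀ x ∈ R, x ∈ N) (hcount : ∀ x ∈ N, R.count x = m) : R = m • N := by
  ext x
  rw [Multiset.count_nsmul]
  by_cases hx : x ∈ N
  · rw [hcount x hx, Multiset.count_eq_one_of_mem hN hx, mul_one]
  · rw [Multiset.count_eq_zero.mpr hx, Multiset.count_eq_zero.mpr (mt (hRN x) hx), mul_zero]

namespace Matrix

variable {ι k : Type*} [Fintype ι] [DecidableEq ι] [Field k]

theorem charpoly_smul [Infinite k] (A : Matrix ι ι k) {ζ : k} (hζ : ζ ≠ 0) :
    (ζ • A).charpoly = A.charpoly.scaleRoots ζ := by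
  refine Polynomial.funext fun y => ?_
  obtain ⟨x, rfl⟩ : ∃ x, y = ζ * x := ⟨ζ⁻¹ * y, by field_simp⟩
  rw [scaleRoots_eval_mul, charpoly_natDegree_eq_dim, eval_charpoly, eval_charpoly, ← det_smul,
    smul_sub, scalar_apply, scalar_apply, ← diagonal_smul]
  rfl

theorem pow_eq_of_mem_roots_charpoly {A : Matrix ι ι k} {r : ℕ} {c : k}
    (hA : A ^ r = c • 1) {x : k} (hx : x ∈ A.charpoly.roots) : x ^ r = c := by
  have hσ : x ^ r ∈ spectrum k (A ^ r) :=
    spectrum.pow_mem_pow A r (mem_spectrum_of_isRoot_charpoly (isRoot_of_mem_roots hx))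
  rcases subsingleton_or_nontrivial (Matrix ι ι k) with _ | _
  · simp [spectrum.of_subsingleton] at hσ
  rwa [hA, ← Algebra.algebraMap_eq_smul_one, spectrum.scalar_eq] at hσ

theorem charpoly_eq_X_pow_sub_C_pow [IsAlgClosed k] {A : Matrix ι ι k} {r : ℕ} {c ζ : k}
    (hr : 0 < r) (hc : c ≠ 0) (hζ : IsPrimitiveRoot ζ r) (hA : A ^ r = c • 1)
    (hsim : (ζ • A).charpoly = A.charpoly) :
    A.charpoly = (X ^ r - C c) ^ (Fintype.card ι / r) := by
  classical
  set R := A.charpoly.roots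
  obtain ⟨a, ha⟩ := IsAlgClosed.exists_pow_nat_eq c hr
  have hR : R.map (ζ * ·) = R := by
    rw [← roots_scaleRoots _ (hζ.isUnit hr.ne'), ← charpoly_smul A (hζ.ne_zero hr.ne'), hsim]
  have hcount : ∀ i : ℕ, R.count (ζ ^ i * a) = R.count a := by
    intro i
    induction i with
    | zero => rw [pow_zero, one_mul]
    | succ i ih =>
      have h := Multiset.count_map_eq_count' (ζ * ·) R (mul_right_injective₀ (hζ.ne_zero hr.ne'))
        (ζ ^ i * a)
      rw [hR] at h
      rw [pow_succ', mul_assoc, h, ih]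
  have hcountN : ∀ x ∈ nthRoots r c, R.count x = R.count a := by
    rw [hζ.nthRoots_eq ha]
    rintro _ hx
    obtain ⟨i, -, rfl⟩ := Multiset.mem_map.1 hx
    exact hcount i
  obtain ⟨m, hRroots⟩ : ∃ m : ℕ, R = m • nthRoots r c :=
    ⟨_, Multiset.eq_nsmul_of_count_eq (hζ.nthRoots_nodup hc)
      (fun x hx => (mem_nthRoots hr).2 (pow_eq_of_mem_roots_charpoly hA hx)) hcountN⟩
  have hcard : Fintype.card ι = m * r := by
    rw [← A.charpoly_natDegree_eq_dim, ← splits_iff_card_roots.mp (IsAlgClosed.splits A.charpoly)]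
    change R.card = _
    rw [hRroots, Multiset.card_nsmul, hζ.nthRoots_eq ha, Multiset.card_map, Multiset.card_range]
  have hXr : ((nthRoots r c).map (X - C ·)).prod = X ^ r - C c :=
    prod_multiset_X_sub_C_of_monic_of_roots_card_eq (monic_X_pow_sub_C c hr.ne') (by
      rw [natDegree_X_pow_sub_C, ← nthRoots, hζ.nthRoots_eq ha, Multiset.card_map,
        Multiset.card_range])
  rw [(IsAlgClosed.splits A.charpoly).eq_prod_roots_of_monic (charpoly_monic A), hcard,
    Nat.mul_div_cancel _ hr, ← hXr, ← Multiset.prod_nsmul, ← Multiset.map_nsmul, ← hRroots]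

theorem det_eq_of_charpoly_eq_X_pow_sub_C_pow {A : Matrix ι ι k} {r m : ℕ} {c : k} (hr : 0 < r)
    (h : A.charpoly = (X ^ r - C c) ^ m) : A.det = (-1) ^ ((r + 1) * m) * c ^ m := by
  have hcard : Fintype.card ι = r * m := by
    rw [← A.charpoly_natDegree_eq_dim, h, natDegree_pow, natDegree_X_pow_sub_C (R := k), mul_comm]
  rw [det_eq_sign_charpoly_coeff, h, coeff_zero_eq_eval_zero, hcard]
  simp [zero_pow hr.ne']
  ring

end Matrix

theorem exists_isPrimitiveRoot_of_forall_pow_eq_one_iff {Γ k : Type*} [Group Γ] [Finite Γ]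
    [Field k] (χ : Γ →* kˣ) {r : ℕ} (h : ∀ d : ℕ, (∀ g, χ g ^ d = 1) ↔ r ∣ d) :
    ∃ g, IsPrimitiveRoot (χ g) r := by
  have : Finite χ.range := Finite.of_surjective _ χ.rangeRestrict_surjective
  obtain ⟨⟨_, g, rfl⟩, hg⟩ := IsCyclic.exists_ofOrder_eq_natCard (α := χ.range)
  refine ⟨g, (h r).2 dvd_rfl g, fun l hl => (h l).1 fun g' => ?_⟩
  have hdvd : Nat.card χ.range ∣ l := hg ▸ orderOf_dvd_of_pow_eq_one (Subtype.ext hl)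
  obtain ⟨q, rfl⟩ := hdvd
  have h' : χ g' ^ Nat.card χ.range = 1 :=
    congrArg Subtype.val (pow_card_eq_one' (x := (⟨χ g', g', rfl⟩ : χ.range)))
  rw [pow_mul, h', one_pow]

theorem exists_isPrimitiveRoot_of_nondegenerate {G k : Type*} [AddCommGroup G] [Finite G]
    [Field k] {e : G → G → kˣ} (hadd : ∀ S S' U, e (S + S') U = e S U * e S' U)
    (hswap : ∀ S U, e U S = (e S U)⁻¹) (hnd : ∀ S ≠ 0, ∃ U, e S U ≠ 1) (T : G) :
    ∃ S, IsPrimitiveRoot (e S T : k) (addOrderOf T) := by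
  have hzero : ∀ U, e 0 U = 1 := fun U =>
    left_eq_mul.mp (by rw [← hadd, add_zero] : e 0 U = e 0 U * e 0 U)
  have hnsmul : ∀ (d : ℕ) S U, e (d • S) U = e S U ^ d := by
    intro d S U
    induction d with
    | zero => rw [zero_smul, pow_zero, hzero]
    | succ d ih => rw [succ_nsmul, hadd, ih, pow_succ]
  let χ : Multiplicative G →* kˣ := MonoidHom.mk' (fun S => e S.toAdd T) fun S S' => hadd _ _ _
  have hχ : ∀ d : ℕ, (∀ S, χ S ^ d = 1) ↔ addOrderOf T ∣ d := by
    intro d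
    rw [addOrderOf_dvd_iff_nsmul_eq_zero]
    refine ⟨fun h => ?_, fun h S => ?_⟩
    · by_contra hd
      obtain ⟨U, hU⟩ := hnd _ hd
      apply hU
      rw [hnsmul, ← _root_.inv_inj, ← inv_pow, ← hswap, inv_one]
      exact h (.ofAdd U)
    · change e S.toAdd T ^ d = 1
      rw [hswap, inv_pow, ← hnsmul, h, hzero, inv_one]
  obtain ⟨S, hS⟩ := exists_isPrimitiveRoot_of_forall_pow_eq_one_iff χ hχ
  exact ⟨S.toAdd, IsPrimitiveRoot.coe_units_iff.mpr hS⟩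

def commPairing {G K : Type*} [Group K] (ε : G → G → K) (S T : G) : K := ε S T / ε T S

theorem commPairing_swap {G K : Type*} [Group K] (ε : G → G → K) (S T : G) :
    commPairing ε T S = (commPairing ε S T)⁻¹ :=
  (inv_div _ _).symm

section ProjectiveRepresentation

variable {G k R : Type*} [AddCommGroup G] [Field k] [Ring R] [Algebra k R]
  {M : G → Rˣ} {ε : G → G → kˣ}

theorem mul_eq_commPairing_smul_mul
    (hmul : ∀ S T, (M S : R) * M T = (ε S T : k) • (M (S + T) : R)) (S T : G) :
    (M S : R) * M T = (↑(commPairing ε S T) : k) • ((M T : R) * M S) := by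
  rw [hmul, hmul, add_comm T S, smul_smul, ← Units.val_mul, commPairing, div_mul_cancel]

theorem mul_mul_inv_eq_commPairing_smul
    (hmul : ∀ S T, (M S : R) * M T = (ε S T : k) • (M (S + T) : R)) (S T : G) :
    (M S : R) * M T * ↑(M S)⁻¹ = (↑(commPairing ε S T) : k) • (M T : R) := by
  rw [mul_eq_commPairing_smul_mul hmul, smul_mul_assoc, mul_assoc, Units.mul_inv, mul_one]

theorem commPairing_add_left [Nontrivial R]
    (hmul : ∀ S T, (M S : R) * M T = (ε S T : k) • (M (S + T) : R)) (S S' T : G) :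
    commPairing ε (S + S') T = commPairing ε S T * commPairing ε S' T := by
  have key : ((ε S S' * commPairing ε (S + S') T : kˣ) : k) • ((M T * M (S + S') : Rˣ) : R) =
      ((ε S S' * (commPairing ε S T * commPairing ε S' T) : kˣ) : k) •
        ((M T * M (S + S') : Rˣ) : R) :=
    calc _ = (M S : R) * M S' * M T := by
          rw [hmul S S', smul_mul_assoc, mul_eq_commPairing_smul_mul hmul (S + S') T, smul_smul,
            Units.val_mul, Units.val_mul]
      _ = _ := by
          rw [mul_assoc, mul_eq_commPairing_smul_mul hmul S' T, mul_smul_comm, ← mul_assoc,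
            mul_eq_commPairing_smul_mul hmul S T, smul_mul_assoc, mul_assoc, hmul S S',
            mul_smul_comm, smul_smul, smul_smul, Units.val_mul, Units.val_mul, Units.val_mul]
          ring_nf
  exact mul_left_cancel (Units.ext (smul_left_injective k (Units.ne_zero _) key))

theorem val_zero_eq_smul_one
    (hmul : ∀ S T, (M S : R) * M T = (ε S T : k) • (M (S + T) : R)) :
    (M 0 : R) = (ε 0 0 : k) • 1 :=
  (Units.mul_left_inj (M 0)).1 ((hmul 0 0).trans (by rw [add_zero, smul_one_mul]))

theorem exists_pow_eq_smul
    (hmul : ∀ S T, (M S : R) * M T = (ε S T : k) • (M (S + T) : R)) (T : G) (j : ℕ) :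
    ∃ u : kˣ, (M T : R) ^ j = (u : k) • (M (j • T) : R) := by
  induction j with
  | zero =>
    refine ⟨(ε 0 0)⁻¹, ?_⟩
    rw [pow_zero, zero_smul, val_zero_eq_smul_one hmul, smul_smul, ← Units.val_mul,
      inv_mul_cancel, Units.val_one, one_smul]
  | succ j ih =>
    obtain ⟨u, hu⟩ := ih
    refine ⟨u * ε (j • T) T, ?_⟩
    rw [pow_succ, hu, smul_mul_assoc, hmul, succ_nsmul, smul_smul, Units.val_mul]

theorem exists_pow_addOrderOf_eq_smul_one
    (hmul : ∀ S T, (M S : R) * M T = (ε S T : k) • (M (S + T) : R)) (T : G) :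
    ∃ c : kˣ, (M T : R) ^ addOrderOf T = (c : k) • 1 := by
  obtain ⟨u, hu⟩ := exists_pow_eq_smul hmul T (addOrderOf T)
  refine ⟨u * ε 0 0, ?_⟩
  rw [hu, addOrderOf_nsmul_eq_zero, val_zero_eq_smul_one hmul, smul_smul, Units.val_mul]

end ProjectiveRepresentation

theorem stmt_15_general {G : Type*} [AddCommGroup G] [Fintype G] {k : Type*} [Field k]
    [IsAlgClosed k] {n : ℕ} (hpos : 0 < n)
    (hexp : ∀ g : G, n • g = 0)
    (M : G → GL (Fin n) k) (ε : G → G → kˣ)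
    (hmul : ∀ S T : G, (M S : Matrix (Fin n) (Fin n) k) * (M T) =
      (ε S T : k) • (M (S + T) : Matrix (Fin n) (Fin n) k))
    (hnd : ∀ S : G, S ≠ 0 → ∃ T : G, ε S T / ε T S ≠ 1)
    (α : G → kˣ)
    (hα : ∀ T : G, (M T : Matrix (Fin n) (Fin n) k) ^ n =
      (α T : k) • (1 : Matrix (Fin n) (Fin n) k))
    (T : G) (r : ℕ) (hr : addOrderOf T = r) :
    ∃ c : k, c ≠ 0 ∧
      Matrix.charpoly (M T : Matrix (Fin n) (Fin n) k) = (X ^ r - C c) ^ (n / r) ∧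
      (c ^ (n / r) = (α T : k) ∨ c ^ (n / r) = -(α T : k)) ∧
      ((M T : Matrix (Fin n) (Fin n) k).det = (α T : k) ∨
        (M T : Matrix (Fin n) (Fin n) k).det = -(α T : k)) ∧
      (Odd n → (M T : Matrix (Fin n) (Fin n) k).det = (α T : k)) := by
  have : NeZero n := ⟨hpos.ne'⟩
  have hrn : r ∣ n := hr ▸ addOrderOf_dvd_of_nsmul_eq_zero (hexp T)
  have hr0 : 0 < r := Nat.pos_of_dvd_of_pos hrn hpos
  obtain ⟨m, hm⟩ := hrn
  have hmr : n / r = m := by rw [hm, Nat.mul_div_cancel_left m hr0]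
  rw [hmr]
  obtain ⟨c, hc⟩ := exists_pow_addOrderOf_eq_smul_one hmul T
  rw [hr] at hc
  have hcα : (c : k) ^ m = α T := by
    refine (smul_left_injective k (one_ne_zero (α := Matrix (Fin n) (Fin n) k)) ?_).symm
    calc (α T : k) • (1 : Matrix (Fin n) (Fin n) k) = (M T : Matrix (Fin n) (Fin n) k) ^ n :=
          (hα T).symm
      _ = ((M T : Matrix (Fin n) (Fin n) k) ^ r) ^ m := by rw [← pow_mul, ← hm]
      _ = (c : k) ^ m • 1 := by rw [hc, _root_.smul_pow, one_pow]
  obtain ⟨S, hζ⟩ := exists_isPrimitiveRoot_of_nondegenerate (commPairing_add_left hmul)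
    (commPairing_swap ε) hnd T
  rw [hr] at hζ
  have hchar : (M T : Matrix (Fin n) (Fin n) k).charpoly = (X ^ r - C (c : k)) ^ m := by
    simpa [hmr] using charpoly_eq_X_pow_sub_C_pow hr0 c.ne_zero hζ hc
      (by rw [← mul_mul_inv_eq_commPairing_smul hmul S T, coe_units_inv, charpoly_units_conj])
  have hdet := det_eq_of_charpoly_eq_X_pow_sub_C_pow hr0 hchar
  refine ⟨c, c.ne_zero, hchar, Or.inl hcα, ?_, fun hn => ?_⟩
  · rw [hdet, hcα]
    rcases neg_one_pow_eq_or k ((r + 1) * m) with h | h <;> simp [h]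
  · have hr_odd : Odd r := (Nat.odd_mul.mp (hm ▸ hn)).1
    rw [hdet, hcα, (hr_odd.add_one.mul_right _).neg_one_pow, one_mul]

/-- In a theta-group-like family `M_T ∈ GL_n(k)` (`T` in a finite abelian group of
order `n²` and exponent `n`, `M_S M_T = ε(S,T) M_{S+T}`, commutator pairing
nondegenerate, `M_T^n = α(T)·I`), if `T` has exact order `r` then the
characteristic polynomial of `M_T` is `(X^r - c)^{n/r}` with `c^{n/r} = ±α(T)`;
in particular `det(M_T) = ±α(T)`, and `det(M_T) = α(T)` if `n` is odd. -/
theorem stmt_15 {G : Type*} [AddCommGroup G] [Fintype G] {k : Type*} [Field k]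
    [IsAlgClosed k] {n : ℕ} (hpos : 0 < n) (hchar : (n : k) ≠ 0)
    (hcard : Fintype.card G = n ^ 2) (hexp : ∀ g : G, n • g = 0)
    (M : G → GL (Fin n) k) (ε : G → G → kˣ)
    (hmul : ∀ S T : G, (M S : Matrix (Fin n) (Fin n) k) * (M T) =
      (ε S T : k) • (M (S + T) : Matrix (Fin n) (Fin n) k))
    (hnd : ∀ S : G, S ≠ 0 → ∃ T : G, ε S T / ε T S ≠ 1)
    (α : G → kˣ)
    (hα : ∀ T : G, (M T : Matrix (Fin n) (Fin n) k) ^ n =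
      (α T : k) • (1 : Matrix (Fin n) (Fin n) k))
    (T : G) (r : ℕ) (hr : addOrderOf T = r) :
    ∃ c : k, c ≠ 0 ∧
      Matrix.charpoly (M T : Matrix (Fin n) (Fin n) k) = (X ^ r - C c) ^ (n / r) ∧
      (c ^ (n / r) = (α T : k) ∨ c ^ (n / r) = -(α T : k)) ∧
      ((M T : Matrix (Fin n) (Fin n) k).det = (α T : k) ∨
        (M T : Matrix (Fin n) (Fin n) k).det = -(α T : k)) ∧
      (Odd n → (M T : Matrix (Fin n) (Fin n) k).det = (α T : k)) :=
  stmt_15_general hpos hexp M ε hmul hnd α hα T r hr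
end

section
/- Let G be a finite abelian group, k a field, ε, ρ : G × G → k* two 2-cocycles. Let A_1 = (Map(G,k), +, *_ε), A_ρ = (Map(G,k), +, *_{ερ}) and F = (Map(G,k), +, *_ρ) be the corresponding twisted group algebras (where ερ denotes the pointwise product of cocycles). Fix a k-basis r_1,…,r_N of Map(G,k) with dual basis r_1*,…,r_N* for the trace form (r,s) ↦ Σ_T r(T)s(T). Then the k-linear map α : A_ρ ⊗_k F → A_1 ⊗_k F determined by x ⊗ 1 ↦ Σ_i (r_i* · x) ⊗ r_i (pointwise product r_i* · x in the first factor) is a homomorphism of F-algebras, and in fact an isomorphism. -/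
open Finset

/-!
Identify `A ⊗ F` with `Map(G × G, k)` and send `δ_S ⊗ δ_V` to `ρ(V, S) δ_S ⊗ δ_{S+V}`. This is
a `k`-linear bijection, commutes with the action of `F` on the second factor by the cocycle
identity, and carries `x ⊗ 1` to the diagonal function `(S, U) ↦ [S = U] x(S)`, which is
`Σ_i (r_i* · x) ⊗ r_i` because the dual-basis relation `Σ_i r_i*(S) r_i(U) = [S = U]` holds.
Multiplicativity comes down to the equality of the coefficients of `(δ_b δ_a)(δ_d δ_c)` and
`(δ_b δ_d)(δ_a δ_c)` in `F`, which holds because `ρ` is symmetric, so that `F` is commutative.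
-/

def IsTwoCocycle {G M : Type*} [AddCommGroup G] [CommGroup M] (ρ : G → G → M) : Prop :=
  ∀ T₁ T₂ T₃ : G, ρ T₁ T₂ * ρ (T₁ + T₂) T₃ = ρ T₁ (T₂ + T₃) * ρ T₂ T₃

namespace IsTwoCocycle

variable {G M : Type*} [AddCommGroup G] [CommGroup M] {ρ : G → G → M}

theorem apply_zero_left (hρ : IsTwoCocycle ρ) (T : G) : ρ 0 T = ρ 0 0 := by
  have h := hρ 0 0 T
  simp only [zero_add] at h
  exact (mul_right_cancel h).symm

theorem mul_apply_add_add (hρ : IsTwoCocycle ρ) (x y z w : G) :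
    ρ (x + y) (z + w) * ρ x y * ρ z w = ρ (x + y + z) w * ρ x (y + z) * ρ y z := by
  calc ρ (x + y) (z + w) * ρ x y * ρ z w
      = (ρ (x + y) (z + w) * ρ z w) * ρ x y := mul_right_comm _ _ _
    _ = ρ (x + y + z) w * (ρ x y * ρ (x + y) z) := by rw [← hρ]; ac_rfl
    _ = ρ (x + y + z) w * ρ x (y + z) * ρ y z := by rw [hρ, mul_assoc]

/-- The coefficients of `(δ_b δ_a)(δ_d δ_c)` and `(δ_b δ_d)(δ_a δ_c)` in the twisted group
algebra of `ρ`. -/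
theorem mul_apply_add_add_comm (hρ : IsTwoCocycle ρ) (hsym : ∀ S T, ρ S T = ρ T S)
    (a b c d : G) :
    ρ (b + a) (d + c) * ρ b a * ρ d c = ρ (b + d) (a + c) * ρ b d * ρ a c := by
  rw [hρ.mul_apply_add_add, hρ.mul_apply_add_add, hsym a d, add_right_comm b a d,
    add_comm a d]

end IsTwoCocycle

theorem sum_mul_eq_ite_of_sum_mul_eq_ite {ι G k : Type*} [Fintype ι] [Fintype G]
    [DecidableEq ι] [DecidableEq G] [CommRing k] (hcard : Fintype.card ι = Fintype.card G)
    (r rs : ι → G → k) (hdual : ∀ i j, ∑ T, rs i T * r j T = if i = j then 1 else 0)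
    (S U : G) : ∑ i, rs i S * r i U = if S = U then 1 else 0 := by
  have hM : Matrix.of rs * Matrix.of (fun T j => r j T) = 1 := by
    ext i j
    simpa [Matrix.mul_apply, Matrix.one_apply] using hdual i j
  have hN := congrFun (congrFun ((Matrix.mul_eq_one_comm_of_card_eq _ _ _ hcard).mp hM) U) S
  simp only [Matrix.mul_apply, Matrix.one_apply, Matrix.of_apply] at hN
  simp_rw [mul_comm (rs _ S), hN, eq_comm]

section TwistedTensor

variable {G k : Type*} [AddCommGroup G] [CommRing k]

/-- Elements of `A ⊗ F` are functions on `G × G`; here the first factor is twisted by `τ`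
and the second by `ρ`. -/
def tensorMul [Fintype G] (τ ρ : G → G → kˣ) (f g : G × G → k) : G × G → k :=
  fun p => ∑ q₁ : G, ∑ q₂ : G,
    (τ q₁ (p.1 - q₁) : k) * (ρ q₂ (p.2 - q₂) : k) * f (q₁, q₂) * g (p.1 - q₁, p.2 - q₂)

def tensorSMul [Fintype G] (ρ : G → G → kˣ) (y : G → k) (f : G × G → k) : G × G → k :=
  fun p => ∑ q : G, (ρ q (p.2 - q) : k) * y q * f (p.1, p.2 - q)

def twistEquiv (ρ : G → G → kˣ) : (G × G → k) ≃ₗ[k] (G × G → k) where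
  toFun f p := (ρ (p.2 - p.1) p.1 : k) * f (p.1, p.2 - p.1)
  invFun g p := ((ρ p.2 p.1)⁻¹ : kˣ) * g (p.1, p.1 + p.2)
  map_add' f g := by funext p; simp only [Pi.add_apply]; ring
  map_smul' c f := by funext p; simp only [Pi.smul_apply, smul_eq_mul, RingHom.id_apply]; ring
  left_inv f := by
    funext p
    simp only [add_sub_cancel_left, ← mul_assoc, ← Units.val_mul, inv_mul_cancel, Units.val_one,
      one_mul]
  right_inv g := by
    funext p
    simp only [add_sub_cancel, ← mul_assoc, ← Units.val_mul, mul_inv_cancel, Units.val_one,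
      one_mul]

variable [Fintype G] {ρ : G → G → kˣ}

theorem twistEquiv_tensorSMul (hρ : IsTwoCocycle ρ) (y : G → k) (f : G × G → k) :
    twistEquiv ρ (tensorSMul ρ y f) = tensorSMul ρ y (twistEquiv ρ f) := by
  funext ⟨S, U⟩
  simp only [twistEquiv, tensorSMul, LinearEquiv.coe_mk, LinearMap.coe_mk, AddHom.coe_mk,
    mul_sum]
  refine sum_congr rfl fun q _ => ?_
  have hc := congrArg Units.val (hρ q (U - S - q) S)
  simp only [Units.val_mul] at hc
  rw [show q + (U - S - q) = U - S by abel, show U - S - q + S = U - q by abel] at hc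
  rw [show U - q - S = U - S - q by abel]
  linear_combination (y q * f (S, U - S - q)) * hc

theorem twistEquiv_tensorMul (hρ : IsTwoCocycle ρ) (hsym : ∀ S T, ρ S T = ρ T S)
    (ε : G → G → kˣ) (f g : G × G → k) :
    twistEquiv ρ (tensorMul (fun S T => ε S T * ρ S T) ρ f g)
      = tensorMul ε ρ (twistEquiv ρ f) (twistEquiv ρ g) := by
  funext ⟨S, U⟩
  simp only [twistEquiv, tensorMul, LinearEquiv.coe_mk, LinearMap.coe_mk, AddHom.coe_mk,
    mul_sum, Units.val_mul]
  refine sum_congr rfl fun a _ => ?_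
  refine Fintype.sum_equiv (Equiv.addLeft a) _ _ fun b => ?_
  simp only [Equiv.coe_addLeft]
  rw [show a + b - a = b by abel, show U - (a + b) - (S - a) = U - S - b by abel]
  have h := hρ.mul_apply_add_add_comm hsym a b (S - a) (U - S - b)
  rw [add_comm b a, show U - S - b + (S - a) = U - (a + b) by abel,
    show b + (U - S - b) = U - S by abel, show a + (S - a) = S by abel] at h
  replace h := congrArg Units.val h
  simp only [Units.val_mul] at h
  linear_combination (-(ε a (S - a) * f (a, b) * g (S - a, U - S - b) : k)) * h

end TwistedTensor

theorem twistEquiv_tensor_one {G k : Type*} [AddCommGroup G] [DecidableEq G] [Field k]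
    {ρ : G → G → kˣ} (hρ : IsTwoCocycle ρ) (x : G → k) :
    twistEquiv ρ (fun p => x p.1 * ((ρ 0 0 : k)⁻¹) * (if p.2 = 0 then 1 else 0))
      = fun p => if p.1 = p.2 then x p.1 else 0 := by
  funext ⟨S, U⟩
  simp only [twistEquiv, LinearEquiv.coe_mk, LinearMap.coe_mk, AddHom.coe_mk, sub_eq_zero,
    eq_comm (a := U)]
  split_ifs with h
  · subst h
    rw [sub_self, hρ.apply_zero_left]
    field_simp
  · ring

theorem sum_dual_tensor_eq_diagonal {G k ι : Type*} [Fintype G] [DecidableEq G] [CommRing k]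
    [Fintype ι] [DecidableEq ι] (hcard : Fintype.card ι = Fintype.card G)
    (r rs : ι → G → k) (hdual : ∀ i j, ∑ T, rs i T * r j T = if i = j then 1 else 0)
    (x : G → k) :
    ∑ i, (fun p : G × G => rs i p.1 * x p.1 * r i p.2)
      = fun p => if p.1 = p.2 then x p.1 else 0 := by
  funext ⟨S, U⟩
  simp only [Finset.sum_apply, mul_right_comm _ (x S), ← sum_mul,
    sum_mul_eq_ite_of_sum_mul_eq_ite hcard r rs hdual, ite_mul, one_mul, zero_mul]

theorem stmt_17_general {G : Type*} [AddCommGroup G] [Fintype G] [DecidableEq G]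
    {k : Type*} [Field k] (ε ρ : G → G → kˣ)
    (hcocρ : ∀ T₁ T₂ T₃ : G, ρ T₁ T₂ * ρ (T₁ + T₂) T₃ = ρ T₁ (T₂ + T₃) * ρ T₂ T₃)
    (hsymρ : ∀ S T : G, ρ S T = ρ T S)
    {ι : Type*} [Fintype ι] [DecidableEq ι]
    (r : Module.Basis ι k (G → k)) (rs : ι → G → k)
    (hdual : ∀ i j : ι, ∑ T : G, rs i T * r j T = if i = j then 1 else 0) :
    -- multiplication on `A ⊗ F` for twisting cocycles `τ₁` (first factor)
    -- and `ρ` (second factor):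
    let mulT : (G → G → kˣ) → (G × G → k) → (G × G → k) → (G × G → k) :=
      fun τ₁ f g p => ∑ q₁ : G, ∑ q₂ : G,
        (τ₁ q₁ (p.1 - q₁) : k) * (ρ q₂ (p.2 - q₂) : k) *
          f (q₁, q₂) * g (p.1 - q₁, p.2 - q₂)
    -- the action of `y ∈ F` on `A ⊗ F`, `y • (a ⊗ b) = a ⊗ (y *_ρ b)`:
    let smulF : (G → k) → (G × G → k) → (G × G → k) :=
      fun y f p => ∑ q : G, (ρ q (p.2 - q) : k) * y q * f (p.1, p.2 - q)
    -- the element `x ⊗ 1_F` (the unit of `F` is `ρ(0,0)⁻¹ δ₀`):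
    let emb : (G → k) → (G × G → k) :=
      fun x p => x p.1 * ((ρ 0 0 : k)⁻¹) * (if p.2 = 0 then 1 else 0)
    -- simple tensors `a ⊗ b`:
    let tens : (G → k) → (G → k) → (G × G → k) := fun a b p => a p.1 * b p.2
    ∃ A : (G × G → k) → (G × G → k),
      Function.Bijective A ∧
      (∀ f g : G × G → k, A (f + g) = A f + A g) ∧
      (∀ (c : k) (f : G × G → k), A (c • f) = c • A f) ∧
      (∀ (y : G → k) (f : G × G → k), A (smulF y f) = smulF y (A f)) ∧
      (∀ x : G → k,
        A (emb x) = ∑ i : ι, tens (fun T => rs i T * x T) (r i)) ∧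
      (∀ f g : G × G → k,
        A (mulT (fun S T => ε S T * ρ S T) f g) = mulT ε (A f) (A g)) := by
  intro mulT smulF emb tens
  have hcard : Fintype.card ι = Fintype.card G :=
    (Module.finrank_eq_card_basis r).symm.trans (Module.finrank_fintype_fun_eq_card k)
  refine ⟨twistEquiv ρ, (twistEquiv ρ).bijective, map_add _, map_smul _,
    twistEquiv_tensorSMul hcocρ, fun x => ?_, twistEquiv_tensorMul hcocρ hsymρ ε⟩
  exact (twistEquiv_tensor_one hcocρ x).trans
    (sum_dual_tensor_eq_diagonal hcard r rs hdual x).symm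

/-- Let `ε, ρ` be 2-cocycles on a finite abelian group `G` with values in `k*`, and
let `A₁ = (Map(G,k), *_ε)`, `A_ρ = (Map(G,k), *_{ερ})`, `F = (Map(G,k), *_ρ)` be the
associated twisted group algebras. Identifying `A ⊗_k F` with `Map(G×G, k)`
(the `F`-algebra structure acting through the second factor), the `F`-linear map
`α : A_ρ ⊗ F → A₁ ⊗ F` determined by `x ⊗ 1 ↦ Σ_i (r_i*·x) ⊗ r_i` (for a basis
`r_i` with trace-form dual basis `r_i*`) is an isomorphism of `F`-algebras. -/
theorem stmt_17 {G : Type*} [AddCommGroup G] [Fintype G] [DecidableEq G]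
    {k : Type*} [Field k] (ε ρ : G → G → kˣ)
    (hcocε : ∀ T₁ T₂ T₃ : G, ε T₁ T₂ * ε (T₁ + T₂) T₃ = ε T₁ (T₂ + T₃) * ε T₂ T₃)
    (hcocρ : ∀ T₁ T₂ T₃ : G, ρ T₁ T₂ * ρ (T₁ + T₂) T₃ = ρ T₁ (T₂ + T₃) * ρ T₂ T₃)
    (hsymρ : ∀ S T : G, ρ S T = ρ T S)
    {ι : Type*} [Fintype ι] [DecidableEq ι]
    (r : Module.Basis ι k (G → k)) (rs : ι → G → k)
    (hdual : ∀ i j : ι, ∑ T : G, rs i T * r j T = if i = j then 1 else 0) :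
    -- multiplication on `A ⊗ F` for twisting cocycles `τ₁` (first factor)
    -- and `ρ` (second factor):
    let mulT : (G → G → kˣ) → (G × G → k) → (G × G → k) → (G × G → k) :=
      fun τ₁ f g p => ∑ q₁ : G, ∑ q₂ : G,
        (τ₁ q₁ (p.1 - q₁) : k) * (ρ q₂ (p.2 - q₂) : k) *
          f (q₁, q₂) * g (p.1 - q₁, p.2 - q₂)
    -- the action of `y ∈ F` on `A ⊗ F`, `y • (a ⊗ b) = a ⊗ (y *_ρ b)`:
    let smulF : (G → k) → (G × G → k) → (G × G → k) :=
      fun y f p => ∑ q : G, (ρ q (p.2 - q) : k) * y q * f (p.1, p.2 - q)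
    -- the element `x ⊗ 1_F` (the unit of `F` is `ρ(0,0)⁻¹ δ₀`):
    let emb : (G → k) → (G × G → k) :=
      fun x p => x p.1 * ((ρ 0 0 : k)⁻¹) * (if p.2 = 0 then 1 else 0)
    -- simple tensors `a ⊗ b`:
    let tens : (G → k) → (G → k) → (G × G → k) := fun a b p => a p.1 * b p.2
    ∃ A : (G × G → k) → (G × G → k),
      Function.Bijective A ∧
      (∀ f g : G × G → k, A (f + g) = A f + A g) ∧
      (∀ (c : k) (f : G × G → k), A (c • f) = c • A f) ∧
      (∀ (y : G → k) (f : G × G → k), A (smulF y f) = smulF y (A f)) ∧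
      (∀ x : G → k,
        A (emb x) = ∑ i : ι, tens (fun T => rs i T * x T) (r i)) ∧
      (∀ f g : G × G → k,
        A (mulT (fun S T => ε S T * ρ S T) f g) = mulT ε (A f) (A g)) :=
  stmt_17_general ε ρ hcocρ hsymρ r rs hdual
end
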